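/- Let G be a group with finite generating set S closed under inversion and not containing the identity, whose word metric d is δ-hyperbolic for some δ ≥ 0, and suppose C₂ > 1 is a constant such that #B_k ≥ C₂ · #B_{k−1} for all integers k ≥ 1. Then there exists a constant C₄ > 0 such that for all g ∈ G and all integers k ≥ 1, the average Gromov product over the sphere of radius k satisfies (1/#S_k) Σ_{s ∈ S_k} (g,s)₁ ≤ C₄. -/

import Mathlib

section Defs

variable {G : Type*} [Group G]

/-- Word length with respect to a generating set `S`: the least `n` such that `g`
is a product of `n` elements of `S`. -/
noncomputable def wlen (S : Set G) (g : G) : ℕ :=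
  sInf {n | ∃ l : List G, (∀ x ∈ l, x ∈ S) ∧ l.length = n ∧ l.prod = g}

/-- Word metric: `d(g,h) = |h⁻¹ g|`. -/
noncomputable def wdist (S : Set G) (x y : G) : ℝ := wlen S (y⁻¹ * x)

/-- Gromov product `(x,y)_w = ½ (d(x,w) + d(w,y) − d(x,y))`. -/
noncomputable def gp (S : Set G) (x y w : G) : ℝ :=
  (wdist S x w + wdist S w y - wdist S x y) / 2

/-- The word metric is `δ`-hyperbolic (Gromov's four-point condition). -/
def IsDeltaHyperbolic (S : Set G) (δ : ℝ) : Prop :=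
  ∀ x y z w : G, gp S x y w ≥ min (gp S x z w) (gp S y z w) - δ

/-- A group is virtually cyclic if it has a cyclic subgroup of finite index. -/
def VirtuallyCyclic (G : Type*) [Group G] : Prop :=
  ∃ H : Subgroup G, IsCyclic H ∧ H.FiniteIndex

/-- `GenCon(g)`: the average word length of the conjugates of `g`
by the generators in `S`. -/
noncomputable def genCon (S : Set G) (g : G) : ℝ :=
  (∑ᶠ s ∈ S, (wlen S (s⁻¹ * g * s) : ℝ)) / S.ncard

/-- Conjugation curvature `κ(g) = (|g| − GenCon(g)) / |g|`. -/
noncomputable def kappa (S : Set G) (g : G) : ℝ :=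
  ((wlen S g : ℝ) - genCon S g) / (wlen S g)

/-- `k`-spherical conjugation curvature
`κ_k(g) = (|g| − (1/#S_k) Σ_{s ∈ S_k} d(gs,s)) / |g|`; note `d(gs,s) = |s⁻¹ g s|`. -/
noncomputable def kappaK (S : Set G) (k : ℕ) (g : G) : ℝ :=
  ((wlen S g : ℝ) -
      (∑ᶠ s ∈ {x : G | wlen S x = k}, (wlen S (s⁻¹ * g * s) : ℝ)) /
        ({x : G | wlen S x = k} : Set G).ncard) / (wlen S g)

end Defs

/-!
Fix `g` and `j ≤ k`. Every `s ∈ S_k` with `(g,s)₁ ≥ j` factors as `s = p · (p⁻¹ s)`, where `p` is the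
point at distance `j` from `1` on a geodesic towards `s` and `p⁻¹ s ∈ B_{k-j}`. By the four-point
condition, applied three times, all these points `p` lie within `6δ` of one another, so at most
`#B_{6δ} · #B_{k-j} ≤ #B_{6δ} · C₂⁻ʲ · #B_k` elements of `S_k` satisfy `(g,s)₁ ≥ j`. Summing over
`j` (layer-cake) bounds `Σ_{s ∈ S_k} (g,s)₁` by a geometric series times `#B_{6δ} · #B_k`, and
`#B_k ≤ C₂ / (C₂ - 1) · #S_k` since `#B_{k-1} ≤ #B_k / C₂`.
-/

open Finset

section Counting

lemma le_card_filter_range_natCast_le {t : ℝ} {k : ℕ} (ht₀ : 0 ≤ t) (htk : t ≤ k) :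
    t ≤ #((range (k + 1)).filter fun j : ℕ => (j : ℝ) ≤ t) := by
  have hfloor : ⌊t⌋₊ ≤ k := Nat.floor_le_of_le htk
  have hsub : range (⌊t⌋₊ + 1) ⊆ {j ∈ range (k + 1) | (j : ℝ) ≤ t} := by
    intro j hj
    simp only [mem_range, mem_filter] at hj ⊢
    exact ⟨by omega, (Nat.le_floor_iff ht₀).1 (by omega)⟩
  have hcard := card_le_card hsub
  rw [card_range] at hcard
  exact (Nat.lt_floor_add_one t).le.trans (by exact_mod_cast hcard)

lemma sum_le_of_card_filter_le {ι : Type*} (A : Finset ι) (f : ι → ℝ) {k : ℕ} {M r : ℝ}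
    (hf₀ : ∀ a ∈ A, 0 ≤ f a) (hfk : ∀ a ∈ A, f a ≤ k) (hr₀ : 0 ≤ r) (hr₁ : r < 1)
    (hlevel : ∀ j ≤ k, (#{a ∈ A | (j : ℝ) ≤ f a} : ℝ) ≤ M * r ^ j) :
    ∑ a ∈ A, f a ≤ M / (1 - r) := by
  have hM : 0 ≤ M := by simpa using (Nat.cast_nonneg _).trans (hlevel 0 k.zero_le)
  have hswap : ∑ a ∈ A, #((range (k + 1)).filter fun j : ℕ => (j : ℝ) ≤ f a) =
      ∑ j ∈ range (k + 1), #{a ∈ A | (j : ℝ) ≤ f a} := by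
    simp only [card_filter]
    exact sum_comm
  have hgeom : ∑ j ∈ range (k + 1), r ^ j ≤ 1 / (1 - r) := by
    have := geom_sum_Ico_le_of_lt_one (m := 0) (n := k + 1) hr₀ hr₁
    rwa [← range_eq_Ico, pow_zero] at this
  calc ∑ a ∈ A, f a
      ≤ ∑ a ∈ A, (#((range (k + 1)).filter fun j : ℕ => (j : ℝ) ≤ f a) : ℝ) :=
        sum_le_sum fun a ha => le_card_filter_range_natCast_le (hf₀ a ha) (hfk a ha)
    _ = ∑ j ∈ range (k + 1), (#{a ∈ A | (j : ℝ) ≤ f a} : ℝ) := by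
        exact_mod_cast hswap
    _ ≤ ∑ j ∈ range (k + 1), M * r ^ j :=
        sum_le_sum fun j hj => hlevel j (mem_range_succ_iff.1 hj)
    _ = M * ∑ j ∈ range (k + 1), r ^ j := (mul_sum _ _ _).symm
    _ ≤ M / (1 - r) := by
        simpa [div_eq_mul_inv] using mul_le_mul_of_nonneg_left hgeom hM

lemma sub_one_mul_ncard_le_mul_ncard_sdiff {α : Type*} {T U : Set α} (hU : U.Finite)
    (hTU : T ⊆ U) {c : ℝ} (h : c * T.ncard ≤ U.ncard) :
    (c - 1) * U.ncard ≤ c * (U \ T).ncard := by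
  have hsplit : ((U \ T).ncard : ℝ) + T.ncard = U.ncard := by
    exact_mod_cast Set.ncard_sdiff_add_ncard_of_subset hTU hU
  rw [← hsplit] at h ⊢
  linear_combination h

end Counting

section WordLength

variable {G : Type*} [Group G] {S : Set G}

lemma exists_list_prod_eq (hgen : Subgroup.closure S = ⊤) (hinv : ∀ s ∈ S, s⁻¹ ∈ S) (g : G) :
    ∃ l : List G, (∀ x ∈ l, x ∈ S) ∧ l.prod = g := by
  have hg : g ∈ (Subgroup.closure S).toSubmonoid := by simp [hgen]
  rw [Subgroup.closure_toSubmonoid] at hg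
  obtain ⟨l, hl, rfl⟩ := Submonoid.exists_list_of_mem_closure hg
  refine ⟨l, fun x hx => ?_, rfl⟩
  rcases hl x hx with h | h
  · exact h
  · simpa using hinv _ (Set.mem_inv.1 h)

lemma exists_list_length_eq_wlen (hgen : Subgroup.closure S = ⊤) (hinv : ∀ s ∈ S, s⁻¹ ∈ S)
    (g : G) : ∃ l : List G, (∀ x ∈ l, x ∈ S) ∧ l.length = wlen S g ∧ l.prod = g := by
  obtain ⟨l, hl, hprod⟩ := exists_list_prod_eq hgen hinv g
  have hne : {n | ∃ l : List G, (∀ x ∈ l, x ∈ S) ∧ l.length = n ∧ l.prod = g}.Nonempty :=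
    ⟨l.length, l, hl, rfl, hprod⟩
  exact Nat.sInf_mem hne

lemma wlen_list_prod_le {l : List G} (h : ∀ x ∈ l, x ∈ S) : wlen S l.prod ≤ l.length :=
  Nat.sInf_le ⟨l, h, rfl, rfl⟩

lemma wlen_one : wlen S (1 : G) = 0 :=
  Nat.le_zero.1 (wlen_list_prod_le (l := []) (by simp))

lemma wlen_mul_le (hgen : Subgroup.closure S = ⊤) (hinv : ∀ s ∈ S, s⁻¹ ∈ S) (a b : G) :
    wlen S (a * b) ≤ wlen S a + wlen S b := by
  obtain ⟨l₁, h₁, hlen₁, rfl⟩ := exists_list_length_eq_wlen hgen hinv a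
  obtain ⟨l₂, h₂, hlen₂, rfl⟩ := exists_list_length_eq_wlen hgen hinv b
  have := wlen_list_prod_le (S := S) (l := l₁ ++ l₂) (by simp only [List.mem_append]; tauto)
  rw [List.prod_append, List.length_append] at this
  omega

lemma wlen_inv (hgen : Subgroup.closure S = ⊤) (hinv : ∀ s ∈ S, s⁻¹ ∈ S) (g : G) :
    wlen S g⁻¹ = wlen S g := by
  have key : ∀ h : G, wlen S h⁻¹ ≤ wlen S h := fun h => by
    obtain ⟨l, hl, hlen, rfl⟩ := exists_list_length_eq_wlen hgen hinv h
    rw [List.prod_inv_reverse, ← hlen, ← List.length_map (f := fun x : G => x⁻¹),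
      ← List.length_reverse]
    refine wlen_list_prod_le fun x hx => ?_
    obtain ⟨y, hy, rfl⟩ := List.mem_map.1 (List.mem_reverse.1 hx)
    exact hinv y (hl y hy)
  exact le_antisymm (key g) (by simpa using key g⁻¹)

lemma finite_setOf_wlen_le (hfin : S.Finite) (hgen : Subgroup.closure S = ⊤)
    (hinv : ∀ s ∈ S, s⁻¹ ∈ S) (k : ℕ) : {x : G | wlen S x ≤ k}.Finite := by
  have : Finite S := hfin
  refine ((List.finite_length_le S k).image fun l => (l.map Subtype.val).prod).subset ?_
  intro x hx
  obtain ⟨l, hl, hlen, rfl⟩ := exists_list_length_eq_wlen hgen hinv x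
  refine ⟨l.attach.map fun y => ⟨y.1, hl y.1 y.2⟩, ?_, ?_⟩
  · simpa [hlen] using hx
  · simp

lemma exists_wlen_eq_and_wlen_inv_mul_eq (hgen : Subgroup.closure S = ⊤)
    (hinv : ∀ s ∈ S, s⁻¹ ∈ S) {g : G} {j : ℕ} (hj : j ≤ wlen S g) :
    ∃ p : G, wlen S p = j ∧ wlen S (p⁻¹ * g) = wlen S g - j := by
  obtain ⟨l, hl, hlen, rfl⟩ := exists_list_length_eq_wlen hgen hinv g
  have htake : wlen S (l.take j).prod ≤ j :=
    (wlen_list_prod_le fun x hx => hl x (List.mem_of_mem_take hx)).trans (List.length_take_le _ _)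
  have hdrop : wlen S (l.drop j).prod ≤ l.length - j :=
    (wlen_list_prod_le fun x hx => hl x (List.mem_of_mem_drop hx)).trans_eq (List.length_drop ..)
  have hsplit := wlen_mul_le hgen hinv (l.take j).prod (l.drop j).prod
  have hrest : (l.take j).prod⁻¹ * l.prod = (l.drop j).prod := by
    rw [← List.prod_take_mul_prod_drop l j, inv_mul_cancel_left]
  rw [List.prod_take_mul_prod_drop] at hsplit
  exact ⟨(l.take j).prod, by omega, by rw [hrest]; omega⟩

end WordLength

section GromovProduct

variable {G : Type*} [Group G] {S : Set G}

lemma wdist_comm (hgen : Subgroup.closure S = ⊤) (hinv : ∀ s ∈ S, s⁻¹ ∈ S) (x y : G) :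
    wdist S x y = wdist S y x := by
  rw [wdist, wdist, ← wlen_inv hgen hinv, mul_inv_rev, inv_inv]

lemma gp_comm (hgen : Subgroup.closure S = ⊤) (hinv : ∀ s ∈ S, s⁻¹ ∈ S) (x y w : G) :
    gp S x y w = gp S y x w := by
  rw [gp, gp, wdist_comm hgen hinv x y, wdist_comm hgen hinv x w, wdist_comm hgen hinv w y]
  ring

lemma gp_one (hgen : Subgroup.closure S = ⊤) (hinv : ∀ s ∈ S, s⁻¹ ∈ S) (x y : G) :
    gp S x y 1 = ((wlen S x : ℝ) + wlen S y - wlen S (y⁻¹ * x)) / 2 := by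
  rw [gp, wdist, wdist, wdist, inv_one, one_mul, mul_one, wlen_inv hgen hinv]

lemma gp_one_nonneg (hgen : Subgroup.closure S = ⊤) (hinv : ∀ s ∈ S, s⁻¹ ∈ S) (x y : G) :
    0 ≤ gp S x y 1 := by
  have h := wlen_mul_le hgen hinv y⁻¹ x
  rw [wlen_inv hgen hinv] at h
  rw [gp_one hgen hinv]
  have : (wlen S (y⁻¹ * x) : ℝ) ≤ wlen S y + wlen S x := by exact_mod_cast h
  linarith

lemma gp_one_le_wlen_right (hgen : Subgroup.closure S = ⊤) (hinv : ∀ s ∈ S, s⁻¹ ∈ S)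
    (x y : G) : gp S x y 1 ≤ wlen S y := by
  have h := wlen_mul_le hgen hinv y (y⁻¹ * x)
  rw [mul_inv_cancel_left] at h
  rw [gp_one hgen hinv]
  have : (wlen S x : ℝ) ≤ wlen S y + wlen S (y⁻¹ * x) := by exact_mod_cast h
  linarith

lemma gp_one_eq_of_wlen_inv_mul_eq (hgen : Subgroup.closure S = ⊤) (hinv : ∀ s ∈ S, s⁻¹ ∈ S)
    {p g : G} {j : ℕ} (hj : j ≤ wlen S g) (hp : wlen S p = j)
    (hpg : wlen S (p⁻¹ * g) = wlen S g - j) : gp S p g 1 = j := by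
  rw [gp_one hgen hinv, ← wlen_inv hgen hinv (g⁻¹ * p), mul_inv_rev, inv_inv, hpg, hp,
    Nat.cast_sub hj]
  ring

lemma wlen_inv_mul_le_of_le_gp_one (hgen : Subgroup.closure S = ⊤) (hinv : ∀ s ∈ S, s⁻¹ ∈ S)
    {δ : ℝ} (hδ : 0 ≤ δ) (hhyp : IsDeltaHyperbolic S δ) {g s t p q : G} {j : ℕ}
    (hp : wlen S p = j) (hq : wlen S q = j) (hps : gp S p s 1 = j) (hqt : gp S q t 1 = j)
    (hgs : j ≤ gp S g s 1) (hgt : j ≤ gp S g t 1) : (wlen S (q⁻¹ * p) : ℝ) ≤ 6 * δ := by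
  have hst : j - δ ≤ gp S s t 1 := by
    have := hhyp s t g 1
    rw [gp_comm hgen hinv s g, gp_comm hgen hinv t g] at this
    have := le_min hgs hgt
    linarith
  have hpt : j - 2 * δ ≤ gp S p t 1 := by
    have := hhyp p t s 1
    rw [gp_comm hgen hinv t s] at this
    have : j - δ ≤ min (gp S p s 1) (gp S s t 1) := le_min (by linarith) hst
    linarith
  have hpq : j - 3 * δ ≤ gp S p q 1 := by
    have := hhyp p q t 1
    have : j - 2 * δ ≤ min (gp S p t 1) (gp S q t 1) := le_min hpt (by linarith)
    linarith
  rw [gp_one hgen hinv, hp, hq] at hpq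
  linarith

lemma card_le_ncard_mul_ncard_of_le_gp_one (hfin : S.Finite) (hgen : Subgroup.closure S = ⊤)
    (hinv : ∀ s ∈ S, s⁻¹ ∈ S) {δ : ℝ} (hδ : 0 ≤ δ) (hhyp : IsDeltaHyperbolic S δ) {D : ℕ}
    (hD : 6 * δ ≤ D) (g : G) {j k : ℕ} (hjk : j ≤ k) (A : Finset G)
    (hA : ∀ s ∈ A, wlen S s = k ∧ (j : ℝ) ≤ gp S g s 1) :
    #A ≤ {x : G | wlen S x ≤ D}.ncard * {x : G | wlen S x ≤ k - j}.ncard := by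
  rcases A.eq_empty_or_nonempty with rfl | ⟨s₀, hs₀⟩
  · simp
  have hgeod : ∀ s ∈ A, ∃ p, wlen S p = j ∧ wlen S (p⁻¹ * s) = k - j ∧ gp S p s 1 = j := by
    intro s hs
    obtain ⟨hsk, -⟩ := hA s hs
    have hj : j ≤ wlen S s := hsk ▸ hjk
    obtain ⟨p, hp, hps⟩ := exists_wlen_eq_and_wlen_inv_mul_eq hgen hinv hj
    exact ⟨p, hp, hsk ▸ hps, gp_one_eq_of_wlen_inv_mul_eq hgen hinv hj hp hps⟩
  choose! p hp hps hgp using hgeod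
  rw [← Set.ncard_coe_finset, ← Set.ncard_prod]
  refine Set.ncard_le_ncard_of_injOn (fun s => ((p s₀)⁻¹ * p s, (p s)⁻¹ * s)) ?_ ?_
    ((finite_setOf_wlen_le hfin hgen hinv D).prod (finite_setOf_wlen_le hfin hgen hinv _))
  · intro s hs
    refine ⟨?_, (hps s hs).le⟩
    have := wlen_inv_mul_le_of_le_gp_one hgen hinv hδ hhyp (hp s hs) (hp s₀ hs₀) (hgp s hs)
      (hgp s₀ hs₀) (hA s hs).2 (hA s₀ hs₀).2
    exact_mod_cast this.trans hD
  · intro s _ t _ hst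
    obtain ⟨hpst, hrest⟩ := Prod.mk.inj hst
    rw [mul_left_cancel hpst] at hrest
    exact mul_left_cancel hrest

end GromovProduct

section Growth

variable {G : Type*} [Group G] {S : Set G}

lemma ncard_setOf_wlen_le_sub_le {c : ℝ} (hc : 0 < c)
    (hgrowth : ∀ k : ℕ, 1 ≤ k →
      c * ({x : G | wlen S x ≤ k - 1}.ncard : ℝ) ≤ {x : G | wlen S x ≤ k}.ncard)
    {j k : ℕ} (hjk : j ≤ k) :
    ({x : G | wlen S x ≤ k - j}.ncard : ℝ) ≤ c⁻¹ ^ j * {x : G | wlen S x ≤ k}.ncard := by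
  have h := geom_le (u := fun i => ({x : G | wlen S x ≤ k - j + i}.ncard : ℝ)) hc.le j
    fun i _ => by simpa [← add_assoc] using hgrowth (k - j + i + 1) (by omega)
  simp only [add_zero, Nat.sub_add_cancel hjk] at h
  rw [inv_pow, ← div_eq_inv_mul, le_div_iff₀ (by positivity)]
  linarith

lemma ncard_setOf_wlen_le_le_div_sub_one_mul {c : ℝ} (hc : 1 < c) {k : ℕ} (hk : 1 ≤ k)
    (hball : {x : G | wlen S x ≤ k}.Finite)
    (h : c * ({x : G | wlen S x ≤ k - 1}.ncard : ℝ) ≤ {x : G | wlen S x ≤ k}.ncard) :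
    ({x : G | wlen S x ≤ k}.ncard : ℝ) ≤ c / (c - 1) * {x : G | wlen S x = k}.ncard := by
  have hsphere : {x : G | wlen S x = k} = {x | wlen S x ≤ k} \ {x | wlen S x ≤ k - 1} := by
    ext x
    simp only [Set.mem_ofPred_eq, Set.mem_sdiff]
    omega
  have hsub : {x : G | wlen S x ≤ k - 1} ⊆ {x | wlen S x ≤ k} :=
    fun x (hx : wlen S x ≤ k - 1) => show wlen S x ≤ k by omega
  rw [div_mul_eq_mul_div, le_div_iff₀ (sub_pos.2 hc), mul_comm, hsphere]
  exact sub_one_mul_ncard_le_mul_ncard_sdiff hball hsub h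

lemma card_filter_le_gp_one_le (hfin : S.Finite) (hgen : Subgroup.closure S = ⊤)
    (hinv : ∀ s ∈ S, s⁻¹ ∈ S) {δ : ℝ} (hδ : 0 ≤ δ) (hhyp : IsDeltaHyperbolic S δ) {c : ℝ}
    (hc : 0 < c) (hgrowth : ∀ k : ℕ, 1 ≤ k →
      c * ({x : G | wlen S x ≤ k - 1}.ncard : ℝ) ≤ {x : G | wlen S x ≤ k}.ncard)
    (g : G) {j k : ℕ} (hjk : j ≤ k) (hsph : {x : G | wlen S x = k}.Finite) :
    (#{s ∈ hsph.toFinset | (j : ℝ) ≤ gp S g s 1} : ℝ) ≤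
      {x : G | wlen S x ≤ ⌈6 * δ⌉₊}.ncard * {x : G | wlen S x ≤ k}.ncard * c⁻¹ ^ j := by
  have hcount := card_le_ncard_mul_ncard_of_le_gp_one hfin hgen hinv hδ hhyp (Nat.le_ceil _) g
    hjk {s ∈ hsph.toFinset | (j : ℝ) ≤ gp S g s 1}
    (fun s hs => by rwa [mem_filter, hsph.mem_toFinset] at hs)
  calc _ ≤ ({x : G | wlen S x ≤ ⌈6 * δ⌉₊}.ncard : ℝ) * {x : G | wlen S x ≤ k - j}.ncard := by
        exact_mod_cast hcount
    _ ≤ {x : G | wlen S x ≤ ⌈6 * δ⌉₊}.ncard * (c⁻¹ ^ j * {x : G | wlen S x ≤ k}.ncard) := by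
        gcongr
        exact ncard_setOf_wlen_le_sub_le hc hgrowth hjk
    _ = _ := by ring

end Growth

theorem sphere_bounding_lemma_general {G : Type*} [Group G] (S : Set G)
    (hfin : S.Finite) (hgen : Subgroup.closure S = ⊤)
    (hinv : ∀ s ∈ S, s⁻¹ ∈ S)
    (δ : ℝ) (hδ : 0 ≤ δ) (hhyp : IsDeltaHyperbolic S δ)
    (C₂ : ℝ) (hC₂ : 1 < C₂)
    (hgrowth : ∀ k : ℕ, 1 ≤ k →
      C₂ * (({x : G | wlen S x ≤ k - 1} : Set G).ncard : ℝ) ≤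
        (({x : G | wlen S x ≤ k} : Set G).ncard : ℝ)) :
    ∃ C₄ : ℝ, 0 < C₄ ∧ ∀ g : G, ∀ k : ℕ, 1 ≤ k →
      (∑ᶠ s ∈ ({x : G | wlen S x = k} : Set G), gp S g s 1) /
        (({x : G | wlen S x = k} : Set G).ncard : ℝ) ≤ C₄ := by
  have hball := finite_setOf_wlen_le hfin hgen hinv
  have hC₂₁ : 0 < C₂ - 1 := sub_pos.2 hC₂
  set N : ℝ := ({x : G | wlen S x ≤ ⌈6 * δ⌉₊}.ncard : ℝ)
  have hN : 0 < N := Nat.cast_pos.2 ((Set.ncard_pos (hball _)).2 ⟨1, by simp [wlen_one]⟩)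
  refine ⟨N * (C₂ / (C₂ - 1)) ^ 2, by positivity, fun g k hk => ?_⟩
  have hsph : {x : G | wlen S x = k}.Finite := (hball k).subset fun x hx => hx.le
  have hsum := sum_le_of_card_filter_le hsph.toFinset (gp S g · 1)
    (fun s _ => gp_one_nonneg hgen hinv g s)
    (fun s hs => hsph.mem_toFinset.1 hs ▸ gp_one_le_wlen_right hgen hinv g s)
    (by positivity) (inv_lt_one_of_one_lt₀ hC₂)
    (fun j hjk => card_filter_le_gp_one_le hfin hgen hinv hδ hhyp (by linarith) hgrowth g hjk hsph)
  rw [finsum_mem_eq_finite_toFinset_sum _ hsph]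
  refine div_le_of_le_mul₀ (Nat.cast_nonneg _) (by positivity) ?_
  calc _ ≤ N * {x : G | wlen S x ≤ k}.ncard / (1 - C₂⁻¹) := hsum
    _ = N * (C₂ / (C₂ - 1)) * {x : G | wlen S x ≤ k}.ncard := by field_simp
    _ ≤ N * (C₂ / (C₂ - 1)) * (C₂ / (C₂ - 1) * {x : G | wlen S x = k}.ncard) := by
        gcongr
        exact ncard_setOf_wlen_le_le_div_sub_one_mul hC₂ hk (hball k) (hgrowth k hk)
    _ = _ := by ring

/-- Sphere bounding lemma: given the growth constant `C₂ > 1`, there is `C₄ > 0`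
bounding, for every `g` and every `k ≥ 1`, the average Gromov product
`(1/#S_k) Σ_{s ∈ S_k} (g,s)₁` over the sphere of radius `k`. -/
theorem sphere_bounding_lemma {G : Type*} [Group G] (S : Set G)
    (hfin : S.Finite) (hgen : Subgroup.closure S = ⊤)
    (hinv : ∀ s ∈ S, s⁻¹ ∈ S) (hone : (1 : G) ∉ S)
    (δ : ℝ) (hδ : 0 ≤ δ) (hhyp : IsDeltaHyperbolic S δ)
    (C₂ : ℝ) (hC₂ : 1 < C₂)
    (hgrowth : ∀ k : ℕ, 1 ≤ k →
      C₂ * (({x : G | wlen S x ≤ k - 1} : Set G).ncard : ℝ) ≤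
        (({x : G | wlen S x ≤ k} : Set G).ncard : ℝ)) :
    ∃ C₄ : ℝ, 0 < C₄ ∧ ∀ g : G, ∀ k : ℕ, 1 ≤ k →
      (∑ᶠ s ∈ ({x : G | wlen S x = k} : Set G), gp S g s 1) /
        (({x : G | wlen S x = k} : Set G).ncard : ℝ) ≤ C₄ :=
  sphere_bounding_lemma_general S hfin hgen hinv δ hδ hhyp C₂ hC₂ hgrowth
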